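/- Let S = ℤ[x₁₁, x₁₂, x₁₃, x₂₂, x₂₃, x₃₃] be a polynomial ring and let X be the symmetric 3×3 matrix with entries X_{ii} = x_{ii} and X_{ij} = X_{ji} = x_{ij} for i < j. Let Λ₂ : S → S be the ℤ-algebra endomorphism squaring each indeterminate, and let G ∈ S satisfy 2·G = Λ₂(det X) − (det X)². Then G·x₁₁x₂₂x₃₃ DOES belong to the ideal of S generated by 2, det X, x₁₁³, x₂₂³, x₃₃³. -/

import Mathlib

open MvPolynomial

/-- The generic symmetric `n × n` matrix, with entries the indeterminates `x_{ij}`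
indexed by pairs `i ≤ j`. -/
noncomputable def symMat (n : ℕ) :
    Matrix (Fin n) (Fin n) (MvPolynomial {q : Fin n × Fin n // q.1 ≤ q.2} ℤ) :=
  Matrix.of fun i j =>
    if h : i ≤ j then X ⟨(i, j), h⟩ else X ⟨(j, i), (not_le.mp h).le⟩

/-- The indeterminate `x_{ij}` (for `i ≤ j`) of the generic symmetric `3 × 3` matrix. -/
noncomputable def sv (i j : Fin 3) (h : i ≤ j) :
    MvPolynomial {q : Fin 3 × Fin 3 // q.1 ≤ q.2} ℤ :=
  X ⟨(i, j), h⟩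

/-- With `X` the generic symmetric `3 × 3` matrix: for `G` with
`2·G = Λ₂(det X) − (det X)²` (`Λ₂` the squaring Frobenius lift), the element
`G·x₁₁x₂₂x₃₃` DOES belong to the ideal `(2, det X, x₁₁³, x₂₂³, x₃₃³)`. -/
theorem stmt_17 (G : MvPolynomial {q : Fin 3 × Fin 3 // q.1 ≤ q.2} ℤ)
    (hG : (2 : MvPolynomial {q : Fin 3 × Fin 3 // q.1 ≤ q.2} ℤ) * G
      = aeval (fun q : {q : Fin 3 × Fin 3 // q.1 ≤ q.2} => X q ^ 2) (symMat 3).det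
        - (symMat 3).det ^ 2) :
    G * (sv 0 0 (by decide) * sv 1 1 (by decide) * sv 2 2 (by decide)) ∈
      Ideal.span {(2 : MvPolynomial {q : Fin 3 × Fin 3 // q.1 ≤ q.2} ℤ), (symMat 3).det,
        sv 0 0 (by decide) ^ 3, sv 1 1 (by decide) ^ 3, sv 2 2 (by decide) ^ 3} := by
  have h00 : (0:Fin 3) ≤ 0 := by decide
  have h01 : (0:Fin 3) ≤ 1 := by decide
  have h02 : (0:Fin 3) ≤ 2 := by decide
  have h11 : (1:Fin 3) ≤ 1 := by decide
  have h12 : (1:Fin 3) ≤ 2 := by decide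
  have h22 : (2:Fin 3) ≤ 2 := by decide
  set a := sv 0 0 h00 with ha
  set b := sv 0 1 h01 with hb
  set c := sv 0 2 h02 with hc
  set d := sv 1 1 h11 with hd
  set e := sv 1 2 h12 with he
  set f := sv 2 2 h22 with hf
  have hdet : (symMat 3).det = a*d*f - a*e^2 - d*c^2 - f*b^2 + 2*b*c*e := by
    rw [ha, hb, hc, hd, he, hf]
    simp [symMat, sv, Matrix.det_fin_three, Matrix.of_apply]
    ring
  have hsq : aeval (fun q : {q : Fin 3 × Fin 3 // q.1 ≤ q.2} => X q ^ 2) (symMat 3).det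
      = a^2*d^2*f^2 - a^2*e^4 - d^2*c^4 - f^2*b^4 + 2*b^2*c^2*e^2 := by
    rw [hdet, ha, hb, hc, hd, he, hf]
    simp only [map_add, map_sub, map_mul, map_pow, map_ofNat, aeval_X, sv]
    ring
  rw [hsq, hdet] at hG
  have key : G * (a * d * f) =
      2 * ((-1)*b*c^5*d^2*e + b^2*c^4*d^2*f + (-1)*b^3*c^3*d*e*f + b^4*c^2*d*f^2
        + (-1)*b^5*c*e*f^2 + a*c^4*d^2*e^2 + (-1)*a*b*c^3*d*e^3 + a*b^2*c^2*d*e^2*f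
        + (-1)*a*b^3*c*e^3*f + a*b^4*e^2*f^2 + a^2*c^2*d*e^4 + (-1)*a^2*c^2*d^3*f^2
        + (-1)*a^2*b*c*e^5 + (-1)*a^2*b*c*d^2*e*f^2 + a^2*b^2*e^4*f
        + (-1)*a^2*b^2*d^2*f^3 + (-1)*a^3*d^2*e^2*f^2)
      + (symMat 3).det * (c^4*d^2 + b^2*c^2*d*f + b^4*f^2 + a*c^2*d*e^2 + a*c^2*d^2*f
        + a*b^2*e^2*f + a*b^2*d*f^2 + a^2*e^4 + a^2*d*e^2*f)
      + a^3 * (e^6 + (-1)*d*e^4*f + 2*d^2*e^2*f^2)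
      + d^3 * (c^6 + (-1)*a*c^4*f + 2*a^2*c^2*f^2)
      + f^3 * (b^6 + (-1)*a*b^4*d + 2*a^2*b^2*d^2) := by
    have h2 : (2 : MvPolynomial {q : Fin 3 × Fin 3 // q.1 ≤ q.2} ℤ) ≠ 0 := two_ne_zero
    refine mul_left_cancel₀ h2 ?_
    rw [hdet]
    linear_combination (a * d * f) * hG
  rw [key]
  have m2 : (2 : MvPolynomial {q : Fin 3 × Fin 3 // q.1 ≤ q.2} ℤ) ∈
      ({2, (symMat 3).det, a ^ 3, d ^ 3, f ^ 3} :
        Set (MvPolynomial {q : Fin 3 × Fin 3 // q.1 ≤ q.2} ℤ)) := Set.mem_insert _ _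
  have mdet : (symMat 3).det ∈
      ({2, (symMat 3).det, a ^ 3, d ^ 3, f ^ 3} :
        Set (MvPolynomial {q : Fin 3 × Fin 3 // q.1 ≤ q.2} ℤ)) :=
    Set.mem_insert_of_mem _ (Set.mem_insert _ _)
  have ma : a ^ 3 ∈ ({2, (symMat 3).det, a ^ 3, d ^ 3, f ^ 3} :
        Set (MvPolynomial {q : Fin 3 × Fin 3 // q.1 ≤ q.2} ℤ)) :=
    Set.mem_insert_of_mem _ (Set.mem_insert_of_mem _ (Set.mem_insert _ _))
  have md : d ^ 3 ∈ ({2, (symMat 3).det, a ^ 3, d ^ 3, f ^ 3} :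
        Set (MvPolynomial {q : Fin 3 × Fin 3 // q.1 ≤ q.2} ℤ)) :=
    Set.mem_insert_of_mem _ (Set.mem_insert_of_mem _ (Set.mem_insert_of_mem _
      (Set.mem_insert _ _)))
  have mf : f ^ 3 ∈ ({2, (symMat 3).det, a ^ 3, d ^ 3, f ^ 3} :
        Set (MvPolynomial {q : Fin 3 × Fin 3 // q.1 ≤ q.2} ℤ)) :=
    Set.mem_insert_of_mem _ (Set.mem_insert_of_mem _ (Set.mem_insert_of_mem _
      (Set.mem_insert_of_mem _ rfl)))
  exact add_mem (add_mem (add_mem (add_mem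
    (Ideal.mul_mem_right _ _ (Ideal.subset_span m2))
    (Ideal.mul_mem_right _ _ (Ideal.subset_span mdet)))
    (Ideal.mul_mem_right _ _ (Ideal.subset_span ma)))
    (Ideal.mul_mem_right _ _ (Ideal.subset_span md)))
    (Ideal.mul_mem_right _ _ (Ideal.subset_span mf))
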